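/- arXiv:2012.12129 — 6 statements merged into one kernel-verified Lean document; each statement's English description precedes it below -/
import Mathlib

section
/- The function n ↦ c_n := (1/(2n)) * ((1/3) * tan(π/n) + cot(π/n)), defined for real n ∈ [3, ∞), is convex and strictly decreasing, and tends to 1/(2π) as n → ∞. -/
/-!
Substituting `t = 2π/n` gives `c_n = φ t / (6π)` with `φ t = t (2 + cos t) / sin t` (`cAngle`),
hence `dc/dn = -t² φ'(t) / (12π²)`. On `(0, π)` one has `t² φ'(t) = (t / sin t)² p(t)`
(`cAngleScaledDeriv`) with `p(t) = (2 + cos t) sin t - t (1 + 2 cos t)` (`cAngleDerivNum`), and both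
factors are positive and increasing: `p' = 2 sin t (t - sin t)` and
`(t / sin t)' = (sin t - t cos t) / sin² t`. Since `t` decreases in `n`, `dc/dn` is negative and
increasing. For the limit, `φ t = (2 + cos t) / sinc t → 3` as `t → 0`.
-/

open Real Set Filter

noncomputable def cFun (n : ℝ) : ℝ :=
  1 / (2 * n) * ((1 / 3) * Real.tan (π / n) + Real.cot (π / n))

open Topology

noncomputable def cAngle (t : ℝ) : ℝ := t * (2 + cos t) / sin t

noncomputable def cAngleDerivNum (t : ℝ) : ℝ := (2 + cos t) * sin t - t * (1 + 2 * cos t)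

noncomputable def cAngleScaledDeriv (t : ℝ) : ℝ := (t / sin t) ^ 2 * cAngleDerivNum t

lemma cFun_eq_cAngle {n : ℝ} (hn : 2 < n) : cFun n = cAngle (2 * π / n) / (6 * π) := by
  have hpi := pi_pos
  have hu : π / n ∈ Ioo 0 (π / 2) := ⟨by positivity, div_lt_div_of_pos_left hpi two_pos hn⟩
  have hsin : sin (π / n) ≠ 0 := (sin_pos_of_pos_of_lt_pi hu.1 (by linarith [hu.2])).ne'
  have hcos : cos (π / n) ≠ 0 := (cos_pos_of_mem_Ioo ⟨by linarith [hu.1], hu.2⟩).ne'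
  rw [cFun, cAngle, tan_eq_sin_div_cos, cot_eq_cos_div_sin, mul_div_assoc 2 π n,
    sin_two_mul, cos_two_mul]
  field_simp
  linear_combination 6 * sin_sq_add_cos_sq (π / n)

lemma cAngle_eq_div_sinc {t : ℝ} (ht : t ≠ 0) : cAngle t = (2 + cos t) / sinc t := by
  rw [cAngle, sinc_of_ne_zero ht, div_div_eq_mul_div, mul_comm]

lemma tendsto_cAngle_zero : Tendsto cAngle (𝓝[≠] 0) (𝓝 3) := by
  have h : Tendsto (fun t => (2 + cos t) / sinc t) (𝓝 0) (𝓝 ((2 + cos 0) / sinc 0)) :=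
    ((continuous_const.add continuous_cos).continuousAt).div continuous_sinc.continuousAt
      (by simp)
  norm_num [sinc_zero] at h
  exact (h.mono_left nhdsWithin_le_nhds).congr'
    (eventually_nhdsWithin_of_forall fun t ht => (cAngle_eq_div_sinc ht).symm)

lemma hasDerivAt_cAngle {t : ℝ} (hs : sin t ≠ 0) :
    HasDerivAt cAngle (cAngleDerivNum t / sin t ^ 2) t := by
  have h := ((hasDerivAt_id' t).mul ((hasDerivAt_cos t).const_add 2)).div (hasDerivAt_sin t) hs
  refine h.congr_deriv ?_
  simp only [cAngleDerivNum, Pi.mul_apply]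
  field_simp
  linear_combination (-t) * sin_sq_add_cos_sq t

lemma hasDerivAt_cAngleDerivNum (t : ℝ) :
    HasDerivAt cAngleDerivNum (2 * sin t * (t - sin t)) t := by
  have h := (((hasDerivAt_cos t).const_add 2).mul (hasDerivAt_sin t)).sub
    ((hasDerivAt_id' t).mul (((hasDerivAt_cos t).const_mul 2).const_add 1))
  refine h.congr_deriv ?_
  linear_combination sin_sq_add_cos_sq t

lemma strictMonoOn_cAngleDerivNum : StrictMonoOn cAngleDerivNum (Icc 0 π) := by
  refine strictMonoOn_of_hasDerivWithinAt_pos (convex_Icc 0 π)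
    (fun t _ => (hasDerivAt_cAngleDerivNum t).continuousAt.continuousWithinAt)
    (fun t _ => (hasDerivAt_cAngleDerivNum t).hasDerivWithinAt) fun t ht => ?_
  rw [interior_Icc] at ht
  have := sin_pos_of_pos_of_lt_pi ht.1 ht.2
  have := sin_lt ht.1
  nlinarith

lemma cAngleDerivNum_pos {t : ℝ} (ht0 : 0 < t) (htπ : t ≤ π) : 0 < cAngleDerivNum t := by
  have h := strictMonoOn_cAngleDerivNum (left_mem_Icc.2 pi_pos.le) ⟨ht0.le, htπ⟩ ht0
  simpa [cAngleDerivNum] using h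

lemma mul_cos_lt_sin {t : ℝ} (ht0 : 0 < t) (htπ : t < π) : t * cos t < sin t := by
  rcases lt_or_ge t (π / 2) with ht | ht
  · have hcos := cos_pos_of_mem_Ioo ⟨by linarith, ht⟩
    have := lt_tan ht0 ht
    rwa [tan_eq_sin_div_cos, lt_div_iff₀ hcos] at this
  · have := cos_nonpos_of_pi_div_two_le_of_le ht (by linarith)
    have := sin_pos_of_pos_of_lt_pi ht0 htπ
    nlinarith

lemma monotoneOn_div_sin : MonotoneOn (fun t => t / sin t) (Ioo 0 π) := by
  have hsin : ∀ t ∈ Ioo 0 π, sin t ≠ 0 := fun t ht => (sin_pos_of_pos_of_lt_pi ht.1 ht.2).ne'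
  have hderiv : ∀ t ∈ Ioo 0 π,
      HasDerivAt (fun t => t / sin t) ((1 * sin t - t * cos t) / sin t ^ 2) t :=
    fun t ht => (hasDerivAt_id' t).div (hasDerivAt_sin t) (hsin t ht)
  refine monotoneOn_of_hasDerivWithinAt_nonneg (convex_Ioo 0 π)
    (fun t ht => (hderiv t ht).continuousAt.continuousWithinAt)
    (fun t ht => (hderiv t (interior_subset ht)).hasDerivWithinAt) fun t ht => ?_
  rw [interior_Ioo] at ht
  have := mul_cos_lt_sin ht.1 ht.2
  exact div_nonneg (by linarith) (sq_nonneg _)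

lemma monotoneOn_cAngleScaledDeriv : MonotoneOn cAngleScaledDeriv (Ioo 0 π) := by
  have hnonneg : ∀ t ∈ Ioo 0 π, 0 ≤ t / sin t := fun t ht =>
    div_nonneg ht.1.le (sin_pos_of_pos_of_lt_pi ht.1 ht.2).le
  refine (monotoneOn_div_sin.mul monotoneOn_div_sin hnonneg hnonneg).mul
    (strictMonoOn_cAngleDerivNum.monotoneOn.mono Ioo_subset_Icc_self)
    (fun t ht => mul_nonneg (hnonneg t ht) (hnonneg t ht))
    (fun t ht => (cAngleDerivNum_pos ht.1 ht.2.le).le) |>.congr fun t _ => ?_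
  simp only [Pi.mul_apply, cAngleScaledDeriv, sq]

lemma cAngleScaledDeriv_pos {t : ℝ} (ht0 : 0 < t) (htπ : t < π) : 0 < cAngleScaledDeriv t := by
  have := sin_pos_of_pos_of_lt_pi ht0 htπ
  have := cAngleDerivNum_pos ht0 htπ.le
  unfold cAngleScaledDeriv
  positivity

lemma two_pi_div_mem_Ioo {n : ℝ} (hn : 2 < n) : 2 * π / n ∈ Ioo 0 π :=
  ⟨by positivity, by rw [div_lt_iff₀ (by linarith)]; nlinarith [pi_pos]⟩

lemma hasDerivAt_cFun {n : ℝ} (hn : 2 < n) :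
    HasDerivAt cFun (-cAngleScaledDeriv (2 * π / n) / (12 * π ^ 2)) n := by
  have ht := two_pi_div_mem_Ioo hn
  have hsin := (sin_pos_of_pos_of_lt_pi ht.1 ht.2).ne'
  have hinv : HasDerivAt (fun m => 2 * π / m) (-(2 * π) / n ^ 2) n := by
    simpa [div_eq_mul_inv, neg_div] using (hasDerivAt_inv (by linarith : n ≠ 0)).const_mul (2 * π)
  have h := ((hasDerivAt_cAngle hsin).comp n hinv).div_const (6 * π)
  refine (h.congr_of_eventuallyEq ?_).congr_deriv ?_
  · filter_upwards [Ioi_mem_nhds hn] with m hm using cFun_eq_cAngle hm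
  · rw [cAngleScaledDeriv]
    field_simp
    ring

lemma convexOn_cFun : ConvexOn ℝ (Ioi 2) cFun := by
  refine MonotoneOn.convexOn_of_deriv (convex_Ioi 2)
    (fun n hn => (hasDerivAt_cFun hn).continuousAt.continuousWithinAt)
    (fun n hn => (hasDerivAt_cFun (interior_subset hn)).differentiableAt.differentiableWithinAt)
    ?_
  rw [interior_Ioi]
  intro a ha b hb hab
  rw [(hasDerivAt_cFun ha).deriv, (hasDerivAt_cFun hb).deriv]
  have := monotoneOn_cAngleScaledDeriv (two_pi_div_mem_Ioo hb) (two_pi_div_mem_Ioo ha)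
    (div_le_div_of_nonneg_left (by positivity) (by linarith [mem_Ioi.1 ha]) hab)
  gcongr

lemma strictAntiOn_cFun : StrictAntiOn cFun (Ioi 2) := by
  refine strictAntiOn_of_hasDerivWithinAt_neg (convex_Ioi 2)
    (fun n hn => (hasDerivAt_cFun hn).continuousAt.continuousWithinAt)
    (fun n hn => (hasDerivAt_cFun (interior_subset hn)).hasDerivWithinAt) fun n hn => ?_
  have ht := two_pi_div_mem_Ioo (interior_subset hn)
  have := cAngleScaledDeriv_pos ht.1 ht.2
  exact div_neg_of_neg_of_pos (neg_neg_of_pos this) (by positivity)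

lemma tendsto_two_pi_div_atTop : Tendsto (fun n : ℝ => 2 * π / n) atTop (𝓝[≠] 0) :=
  tendsto_nhdsWithin_iff.2 ⟨tendsto_const_nhds.div_atTop tendsto_id,
    (eventually_gt_atTop 0).mono fun n hn => (by positivity : 2 * π / n ≠ 0)⟩

lemma tendsto_cFun_atTop : Tendsto cFun atTop (𝓝 (1 / (2 * π))) := by
  have h := (tendsto_cAngle_zero.comp tendsto_two_pi_div_atTop).div_const (6 * π)
  rw [show (3 : ℝ) / (6 * π) = 1 / (2 * π) by field_simp; norm_num] at h
  exact h.congr' <| (eventually_gt_atTop 2).mono fun n hn => (cFun_eq_cAngle hn).symm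

/-- On `[3, ∞)` the function `n ↦ c_n` is convex and strictly decreasing, and it
tends to `1/(2π)` as `n → ∞`. -/
theorem stmt1 :
    ConvexOn ℝ (Set.Ici (3 : ℝ)) cFun ∧ StrictAntiOn cFun (Set.Ici (3 : ℝ)) ∧
      Tendsto cFun atTop (nhds (1 / (2 * π))) := by
  have hsub : Ici (3 : ℝ) ⊆ Ioi 2 := Ici_subset_Ioi.2 (by norm_num)
  exact ⟨convexOn_cFun.subset hsub (convex_Ici 3), strictAntiOn_cFun.mono hsub,
    tendsto_cFun_atTop⟩
end

section
/- The function α ↦ (α·2^{1−α} − 2 + α)/(1 − α) is increasing on (0, 1), and its limit as α → 1⁻ equals ln 2 − 2. -/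
open Real Set Filter

/-!
The numerator is `u α - u 1` for `u α = α · 2^{1-α} + α`, so the function is minus the slope of
the secant of `u` through `1`. Since `(t · b^{1-t})'' = -log b · b^{1-t} · (2 - t log b)`, `u` is
strictly concave on `(-∞, 2 / log 2) ⊇ [0, 1]`; hence that slope decreases on `(0, 1)`, and as
`α → 1` it tends to `u'(1) = 2 - log 2`.
-/

lemma hasDerivAt_rpow_one_sub {b : ℝ} (hb : 0 < b) (x : ℝ) :
    HasDerivAt (fun t : ℝ => b ^ (1 - t)) (-(b ^ (1 - x) * log b)) x :=
  ((hasStrictDerivAt_const_rpow hb (1 - x)).hasDerivAt.comp x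
    ((hasDerivAt_id' x).const_sub 1)).congr_deriv (by ring)

lemma hasDerivAt_mul_rpow_one_sub {b : ℝ} (hb : 0 < b) (x : ℝ) :
    HasDerivAt (fun t : ℝ => t * b ^ (1 - t)) (b ^ (1 - x) * (1 - x * log b)) x :=
  ((hasDerivAt_id' x).mul (hasDerivAt_rpow_one_sub hb x)).congr_deriv (by ring)

theorem strictConcaveOn_mul_rpow_one_sub {b : ℝ} (hb : 1 < b) :
    StrictConcaveOn ℝ (Iio (2 / log b)) (fun t : ℝ => t * b ^ (1 - t)) := by
  have hb0 : 0 < b := zero_lt_one.trans hb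
  have hlog : 0 < log b := log_pos hb
  have hderiv : deriv (fun t : ℝ => t * b ^ (1 - t)) = fun t => b ^ (1 - t) * (1 - t * log b) :=
    funext fun x => (hasDerivAt_mul_rpow_one_sub hb0 x).deriv
  have hderiv2 (x : ℝ) : HasDerivAt (fun t : ℝ => b ^ (1 - t) * (1 - t * log b))
      (-(log b * b ^ (1 - x) * (2 - x * log b))) x :=
    ((hasDerivAt_rpow_one_sub hb0 x).mul
      (((hasDerivAt_id' x).mul_const (log b)).const_sub 1)).congr_deriv (by ring)
  refine strictConcaveOn_of_deriv2_neg (convex_Iio _)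
    (fun x _ => (hasDerivAt_mul_rpow_one_sub hb0 x).continuousAt.continuousWithinAt) ?_
  intro x hx
  rw [interior_Iio, mem_Iio, lt_div_iff₀ hlog] at hx
  rw [Function.iterate_succ_apply, Function.iterate_one, hderiv, (hderiv2 x).deriv, neg_lt_zero]
  exact mul_pos (mul_pos hlog (rpow_pos_of_pos hb0 _)) (by linarith)

lemma strictConcaveOn_mul_two_rpow_one_sub_add :
    StrictConcaveOn ℝ (Icc 0 1) (fun t : ℝ => t * (2 : ℝ) ^ (1 - t) + t) := by
  have hsub : Icc (0 : ℝ) 1 ⊆ Iio (2 / log 2) := fun t ht => by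
    rw [mem_Iio, lt_div_iff₀ (log_pos one_lt_two)]
    nlinarith [ht.1, ht.2, log_two_lt_d9, log_pos one_lt_two]
  exact ((strictConcaveOn_mul_rpow_one_sub one_lt_two).subset hsub (convex_Icc 0 1)).add_concaveOn
    (concaveOn_id (convex_Icc 0 1))

lemma hasDerivAt_mul_two_rpow_one_sub_add_one :
    HasDerivAt (fun t : ℝ => t * (2 : ℝ) ^ (1 - t) + t) (2 - log 2) 1 :=
  ((hasDerivAt_mul_rpow_one_sub two_pos 1).add (hasDerivAt_id' 1)).congr_deriv (by norm_num; ring)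

-- At `α = 1` both sides are `0`, through the junk value of division by zero.
lemma div_one_sub_eq_neg_slope :
    (fun α : ℝ => (α * (2 : ℝ) ^ (1 - α) - 2 + α) / (1 - α)) =
      fun α => -slope (fun t : ℝ => t * (2 : ℝ) ^ (1 - t) + t) 1 α := by
  funext α
  rw [slope_def_field, ← neg_div_neg_eq, neg_div, neg_sub]
  norm_num
  ring

/-- The function `α ↦ (α·2^{1−α} − 2 + α)/(1 − α)` is increasing on `(0,1)` and its
limit as `α → 1⁻` equals `ln 2 − 2`. -/
theorem stmt7 :
    StrictMonoOn (fun α : ℝ => (α * (2 : ℝ) ^ (1 - α) - 2 + α) / (1 - α))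
      (Set.Ioo 0 1) ∧
    Tendsto (fun α : ℝ => (α * (2 : ℝ) ^ (1 - α) - 2 + α) / (1 - α))
      (nhdsWithin 1 (Set.Iio 1)) (nhds (Real.log 2 - 2)) := by
  rw [div_one_sub_eq_neg_slope]
  constructor
  · intro x hx y hy hxy
    rw [neg_lt_neg_iff, slope_def_field, slope_def_field]
    exact strictConcaveOn_mul_two_rpow_one_sub_add.secant_strict_mono
      (right_mem_Icc.2 zero_le_one) (Ioo_subset_Icc_self hx) (Ioo_subset_Icc_self hy)
      hx.2.ne hy.2.ne hxy
  · rw [show log 2 - 2 = -(2 - log 2) by ring]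
    exact (hasDerivAt_mul_two_rpow_one_sub_add_one.tendsto_slope.mono_left
      (nhdsLT_le_nhdsNE 1)).neg
end

section
/- For the case α = 1, define h₁(m, n) = c_n m² − c₆ m − c₆ m ln m − κ (n − 6) for m > 0, n ≥ 3, with c₆ = 5/(18√3), κ = 2π/243 − 5√3/324, and c_n = (1/(2n))((1/3)tan(π/n) + cot(π/n)). Then for each fixed n ≥ 3, the map m ↦ ∂_m h₁(m, n) = 2 c_n m − 2 c₆ − c₆ ln m is strictly convex with unique critical point m = c₆/(2 c_n), and ∂_m h₁(c₆/(2c_n), n) = −c₆ − c₆ ln(c₆/(2c_n)) < 0; consequently m ↦ h₁(m, n) has exactly two critical points, the larger being a local minimum. -/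
/-!
The derivative of `g1 n = ∂ₘ h₁(·, n)` is `2 c_n - c₆ / m`, so `g1 n` decreases and then
increases, with minimum at `M = c₆ / (2 c_n)` where its value is `-c₆ (1 + log M)`. This is
negative exactly when `2 c_n < c₆ e`. Writing `x = π / n ≤ π / 3`, we have
`π · 2 c_n = x tan x / 3 + x cot x`; convexity of `tan` on `[0, π/3]` bounds the first term by
`(√3 / π) x²`, and `tan x ≥ x + x³ / 3` bounds the second by `3 / (3 + x²)`, so the sum stays
below `1.34 < π c₆ e`. As `g1 n` tends to `+∞` at both ends of `(0, ∞)`, it has exactly two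
zeros, and `h₁(·, n)` changes from decreasing to increasing at the larger one.
-/

open Real Set Filter

noncomputable def c6 : ℝ := 5 / (18 * Real.sqrt 3)

noncomputable def kappa : ℝ := 2 * π / 243 - 5 * Real.sqrt 3 / 324

noncomputable def h1 (m n : ℝ) : ℝ :=
  cFun n * m ^ 2 - c6 * m - c6 * m * Real.log m - kappa * (n - 6)

/-- The partial derivative `∂_m h₁(m,n)`. -/
noncomputable def g1 (n m : ℝ) : ℝ := 2 * cFun n * m - 2 * c6 - c6 * Real.log m

namespace Real

lemma cot_eq_inv_tan (x : ℝ) : cot x = (tan x)⁻¹ := by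
  rw [cot_eq_cos_div_sin, tan_eq_sin_div_cos, inv_div]

lemma add_pow_three_div_three_le_tan {x : ℝ} (hx₀ : 0 ≤ x) (hx : x < π / 2) :
    x + x ^ 3 / 3 ≤ tan x := by
  have hcos : ∀ y ∈ Ico 0 (π / 2), cos y ≠ 0 := fun y hy =>
    (cos_pos_of_mem_Ioo ⟨by linarith [pi_pos, hy.1], hy.2⟩).ne'
  have hderiv : ∀ y ∈ Ico 0 (π / 2), HasDerivAt (fun y => tan y - (y + y ^ 3 / 3))
      (1 / cos y ^ 2 - (1 + ((3 : ℕ) : ℝ) * y ^ 2 / 3)) y := fun y hy =>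
    (hasDerivAt_tan (hcos y hy)).sub ((hasDerivAt_id y).add ((hasDerivAt_pow 3 y).div_const 3))
  -- the derivative is `tan² y - y² ≥ 0`
  have hmono : MonotoneOn (fun y => tan y - (y + y ^ 3 / 3)) (Ico 0 (π / 2)) := by
    refine monotoneOn_of_deriv_nonneg (convex_Ico 0 (π / 2))
      (fun y hy => (hderiv y hy).continuousAt.continuousWithinAt) ?_ ?_ <;> rw [interior_Ico]
    · exact fun y hy => (hderiv y (Ioo_subset_Ico_self hy)).differentiableAt.differentiableWithinAt
    · intro y hy
      rw [(hderiv y (Ioo_subset_Ico_self hy)).deriv, one_div, ← inv_one_add_tan_sq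
        (hcos y (Ioo_subset_Ico_self hy)), inv_inv]
      have := le_tan hy.1.le hy.2
      push_cast
      nlinarith [hy.1]
  have := hmono ⟨le_rfl, by positivity⟩ ⟨hx₀, hx⟩ hx₀
  simp only [tan_zero] at this
  linarith

lemma convexOn_tan : ConvexOn ℝ (Ico 0 (π / 2)) tan := by
  have hcos : ∀ y ∈ Ico 0 (π / 2), 0 < cos y := fun y hy =>
    cos_pos_of_mem_Ioo ⟨by linarith [pi_pos, hy.1], hy.2⟩
  refine MonotoneOn.convexOn_of_deriv (convex_Ico 0 (π / 2))
    (fun y hy => (hasDerivAt_tan (hcos y hy).ne').continuousAt.continuousWithinAt) ?_ ?_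
    <;> rw [interior_Ico]
  · exact fun y hy =>
      (hasDerivAt_tan (hcos y (Ioo_subset_Ico_self hy)).ne').differentiableAt.differentiableWithinAt
  · intro a ha b hb hab
    rw [deriv_tan, deriv_tan]
    have hcos_le : cos b ≤ cos a :=
      cos_le_cos_of_nonneg_of_le_pi ha.1.le (by linarith [hb.2, pi_pos]) hab
    have := hcos b (Ioo_subset_Ico_self hb)
    gcongr

lemma tan_le_div_mul {x a : ℝ} (hx₀ : 0 ≤ x) (hxa : x ≤ a) (ha : a < π / 2) :
    tan x ≤ tan a / a * x := by
  rcases hx₀.eq_or_lt with rfl | hx₀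
  · simp
  have ha₀ : 0 < a := hx₀.trans_le hxa
  have hchord := convexOn_tan.2 (⟨le_rfl, by positivity⟩ : (0 : ℝ) ∈ Ico 0 (π / 2))
    ⟨ha₀.le, ha⟩ (sub_nonneg.2 ((div_le_one ha₀).2 hxa)) (div_nonneg hx₀.le ha₀.le)
    (sub_add_cancel 1 _)
  simp only [smul_eq_mul, mul_zero, zero_add, tan_zero, div_mul_cancel₀ x ha₀.ne'] at hchord
  linarith [div_mul_comm x a (tan a)]

lemma mul_cot_le {x : ℝ} (hx₀ : 0 < x) (hx : x < π / 2) : x * cot x ≤ 3 / (3 + x ^ 2) := by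
  have hpos : 0 < x + x ^ 3 / 3 := by positivity
  calc x * cot x = x / tan x := by rw [cot_eq_inv_tan, div_eq_mul_inv]
    _ ≤ x / (x + x ^ 3 / 3) :=
      div_le_div_of_nonneg_left hx₀.le hpos (add_pow_three_div_three_le_tan hx₀.le hx)
    _ = 3 / (3 + x ^ 2) := by field_simp

end Real

lemma exists_zeroSet_eq_pair {f : ℝ → ℝ} {a M b : ℝ} (ha : 0 < a) (haM : a < M) (hMb : M < b)
    (hf : ContinuousOn f (Ioi 0)) (hanti : StrictAntiOn f (Ioc 0 M))
    (hmono : StrictMonoOn f (Ici M)) (hfa : 0 < f a) (hfM : f M < 0) (hfb : 0 < f b) :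
    ∃ m₁ m₂, 0 < m₁ ∧ m₁ < M ∧ M < m₂ ∧ {m | m ∈ Ioi 0 ∧ f m = 0} = {m₁, m₂} := by
  have hM : 0 < M := ha.trans haM
  obtain ⟨m₁, ⟨ham₁, hm₁M⟩, hfm₁⟩ := intermediate_value_Ioo' haM.le
    (hf.mono fun y hy => ha.trans_le hy.1) ⟨hfM, hfa⟩
  obtain ⟨m₂, ⟨hMm₂, -⟩, hfm₂⟩ := intermediate_value_Ioo hMb.le
    (hf.mono fun y hy => hM.trans_le hy.1) ⟨hfM, hfb⟩
  have hm₁ : 0 < m₁ := ha.trans ham₁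
  refine ⟨m₁, m₂, hm₁, hm₁M, hMm₂, Set.ext fun m => ⟨?_, ?_⟩⟩
  · rintro ⟨hm, hfm⟩
    rcases le_or_gt m M with hmM | hMm
    · exact .inl (hanti.injOn ⟨hm, hmM⟩ ⟨hm₁, hm₁M.le⟩ (hfm.trans hfm₁.symm))
    · exact .inr (hmono.injOn hMm.le hMm₂.le (hfm.trans hfm₂.symm))
  · rintro (rfl | rfl)
    · exact ⟨hm₁, hfm₁⟩
    · exact ⟨hM.trans hMm₂, hfm₂⟩

lemma isLocalMin_of_hasDerivAt_of_strictMonoOn {F f : ℝ → ℝ} {M x : ℝ} (hMx : M < x)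
    (hF : ∀ y ∈ Ioi M, HasDerivAt F (f y) y) (hf : StrictMonoOn f (Ioi M)) (hfx : f x = 0) :
    IsLocalMin F x := by
  have hdiff : DifferentiableOn ℝ F (Ioi M) := fun y hy =>
    (hF y hy).differentiableAt.differentiableWithinAt
  refine isLocalMin_of_deriv_Ioo hMx (lt_add_one x) (hF x hMx).continuousAt
    (hdiff.mono Ioo_subset_Ioi_self) (hdiff.mono fun y hy => hMx.trans hy.1) ?_ ?_
  · intro y hy
    rw [(hF y hy.1).deriv, ← hfx]
    exact (hf hy.1 hMx hy.2).le
  · intro y hy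
    rw [(hF y (hMx.trans hy.1)).deriv, ← hfx]
    exact (hf hMx (hMx.trans hy.1) hy.1).le

lemma mul_tan_div_three_add_mul_cot_lt {x : ℝ} (hx₀ : 0 < x) (hx : x ≤ π / 3) :
    x * tan x / 3 + x * cot x < 1.34 := by
  have hpi := pi_pos
  have htan : x * tan x / 3 ≤ √3 / π * x ^ 2 := by
    have := mul_le_mul_of_nonneg_left (tan_le_div_mul hx₀.le hx (by linarith)) hx₀.le
    rw [tan_pi_div_three] at this
    calc x * tan x / 3 ≤ x * (√3 / (π / 3) * x) / 3 := by linarith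
      _ = √3 / π * x ^ 2 := by field_simp
  have hcot := mul_cot_le hx₀ (by linarith)
  have hk : √3 / π < 0.5514 := by
    rw [div_lt_iff₀ hpi]
    have hsqrt3 : √3 < 1.7321 := (sqrt_lt' (by norm_num)).2 (by norm_num)
    nlinarith [pi_gt_d6]
  have hs : x ^ 2 ≤ 1.1 := by nlinarith [pi_lt_d6]
  -- `s ↦ 3 / (3 + s)` is convex, so it lies below its chord on `[0, 1.1]`
  have hchord : 3 / (3 + x ^ 2) ≤ 1 - 10 * x ^ 2 / 41 := by
    rw [div_le_iff₀ (by positivity)]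
    nlinarith [mul_nonneg (sq_nonneg x) (sub_nonneg.2 hs)]
  linarith [mul_le_mul_of_nonneg_right hk.le (sq_nonneg x)]

lemma c6_pos : 0 < c6 := by unfold c6; positivity

lemma cFun_pos {n : ℝ} (hn : 2 < n) : 0 < cFun n := by
  have hx₀ : 0 < π / n := div_pos pi_pos (by linarith)
  have hx : π / n < π / 2 := div_lt_div_of_pos_left pi_pos two_pos hn
  have htan := tan_pos_of_pos_of_lt_pi_div_two hx₀ hx
  have hcot : 0 < cot (π / n) := by rw [cot_eq_inv_tan]; positivity
  unfold cFun
  have : 0 < n := by linarith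
  positivity

lemma pi_mul_two_mul_cFun {n : ℝ} (hn : n ≠ 0) :
    π * (2 * cFun n) = π / n * tan (π / n) / 3 + π / n * cot (π / n) := by
  unfold cFun
  field_simp

lemma two_mul_cFun_lt_c6_mul_exp_one {n : ℝ} (hn : 3 ≤ n) : 2 * cFun n < c6 * exp 1 := by
  have hpi := pi_pos
  have hx₀ : 0 < π / n := div_pos hpi (by linarith)
  have hx : π / n ≤ π / 3 := div_le_div_of_nonneg_left hpi.le three_pos hn
  have hlt := mul_tan_div_three_add_mul_cot_lt hx₀ hx
  rw [← pi_mul_two_mul_cFun (by linarith)] at hlt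
  have hc6 : 1.34 < π * (c6 * exp 1) := by
    have hs : √3 < 1.7321 := (sqrt_lt' (by norm_num)).2 (by norm_num)
    have hprod : 2.7182818 * 3.141592 < exp 1 * π :=
      mul_lt_mul'' (by linarith [exp_one_gt_d9]) pi_gt_d6 (by norm_num) (by norm_num)
    have : π * (c6 * exp 1) = 5 * (exp 1 * π) / (18 * √3) := by unfold c6; field_simp
    rw [this, lt_div_iff₀ (by positivity)]
    linarith
  exact lt_of_mul_lt_mul_left (hlt.trans hc6) hpi.le

lemma hasDerivAt_h1 (n : ℝ) {m : ℝ} (hm : 0 < m) :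
    HasDerivAt (fun m => h1 m n) (g1 n m) m := by
  have hh : (fun m => h1 m n) =
      fun m => cFun n * m ^ 2 - c6 * m - c6 * (m * log m) - kappa * (n - 6) := by
    ext; simp only [h1]; ring
  rw [hh]
  refine ((((hasDerivAt_pow 2 m).const_mul (cFun n)).sub ((hasDerivAt_id' m).const_mul c6)).sub
    ((hasDerivAt_mul_log hm.ne').const_mul c6)).sub_const (kappa * (n - 6)) |>.congr_deriv ?_
  simp only [g1]; push_cast; ring

lemma hasDerivAt_g1 (n : ℝ) {m : ℝ} (hm : 0 < m) :
    HasDerivAt (g1 n) (2 * cFun n - c6 / m) m := by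
  refine (((hasDerivAt_id' m).const_mul (2 * cFun n)).sub_const (2 * c6)).sub
    ((hasDerivAt_log hm.ne').const_mul c6) |>.congr_deriv ?_
  rw [mul_one, div_eq_mul_inv]

lemma strictConvexOn_g1 (n : ℝ) : StrictConvexOn ℝ (Ioi 0) (g1 n) := by
  refine ⟨convex_Ioi 0, fun x hx y hy hxy a b ha hb hab => ?_⟩
  have hlog := mul_lt_mul_of_pos_left (strictConcaveOn_log_Ioi.2 hx hy hxy ha hb hab) c6_pos
  simp only [smul_eq_mul, g1] at hlog ⊢
  have hconst : a * (2 * c6) + b * (2 * c6) = 2 * c6 := by rw [← add_mul, hab, one_mul]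
  nlinarith

noncomputable def critPt (n : ℝ) : ℝ := c6 / (2 * cFun n)

section Valley

variable {n : ℝ}

lemma critPt_pos (hc : 0 < cFun n) : 0 < critPt n := div_pos c6_pos (by positivity)

lemma critPt_lt_sq (hc : 0 < cFun n) : critPt n < (c6 / cFun n + 1) ^ 2 := by
  have : critPt n < c6 / cFun n := div_lt_div_of_pos_left c6_pos hc (by linarith)
  nlinarith [div_pos c6_pos hc]

lemma two_mul_cFun_sub_div_eq_zero_iff (hc : cFun n ≠ 0) {m : ℝ} (hm : m ≠ 0) :
    2 * cFun n - c6 / m = 0 ↔ m = critPt n := by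
  rw [critPt, sub_eq_zero, eq_div_iff hm, eq_div_iff (mul_ne_zero two_ne_zero hc), mul_comm,
    eq_comm]

lemma g1_critPt (hc : cFun n ≠ 0) : g1 n (critPt n) = -c6 - c6 * log (critPt n) := by
  rw [g1, critPt, mul_div_cancel₀ _ (mul_ne_zero two_ne_zero hc)]
  ring

lemma exp_neg_one_lt_critPt (hn : 3 ≤ n) : exp (-1) < critPt n := by
  have hc := cFun_pos (by linarith : (2 : ℝ) < n)
  rw [critPt, exp_neg, ← one_div, div_lt_div_iff₀ (exp_pos 1) (by positivity)]
  linarith [two_mul_cFun_lt_c6_mul_exp_one hn]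

lemma g1_critPt_neg (hn : 3 ≤ n) : g1 n (critPt n) < 0 := by
  have hc := cFun_pos (by linarith : (2 : ℝ) < n)
  have hlog : -1 < log (critPt n) :=
    (lt_log_iff_exp_lt (critPt_pos hc)).2 (exp_neg_one_lt_critPt hn)
  rw [g1_critPt hc.ne']
  nlinarith [c6_pos]

lemma strictAntiOn_g1 (hc : 0 < cFun n) : StrictAntiOn (g1 n) (Ioc 0 (critPt n)) := by
  refine strictAntiOn_of_deriv_neg (convex_Ioc 0 _)
    (fun y hy => (hasDerivAt_g1 n hy.1).continuousAt.continuousWithinAt) fun y hy => ?_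
  rw [interior_Ioc] at hy
  rw [(hasDerivAt_g1 n hy.1).deriv, sub_neg, lt_div_iff₀ hy.1, ← lt_div_iff₀' (by positivity)]
  exact hy.2

lemma strictMonoOn_g1 (hc : 0 < cFun n) : StrictMonoOn (g1 n) (Ici (critPt n)) := by
  have hpos : ∀ y ∈ Ici (critPt n), 0 < y := fun y hy => (critPt_pos hc).trans_le hy
  refine strictMonoOn_of_deriv_pos (convex_Ici _)
    (fun y hy => (hasDerivAt_g1 n (hpos y hy)).continuousAt.continuousWithinAt) fun y hy => ?_
  rw [interior_Ici] at hy
  have hy₀ := hpos y (Ioi_subset_Ici_self hy)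
  rw [(hasDerivAt_g1 n hy₀).deriv, sub_pos, div_lt_iff₀ hy₀, ← div_lt_iff₀' (by positivity)]
  exact hy

lemma g1_exp_neg_two_pos (hc : 0 < cFun n) : 0 < g1 n (exp (-2)) := by
  rw [g1, log_exp]
  nlinarith [exp_pos (-2)]

-- `log (t ^ 2) ≤ 2 (t - 1)`, so `g1 n (t ^ 2) ≥ t (2 c_n t - 2 c₆)`
lemma g1_sq_pos (hc : 0 < cFun n) : 0 < g1 n ((c6 / cFun n + 1) ^ 2) := by
  set t := c6 / cFun n + 1
  have ht : 0 < t := by have := c6_pos; positivity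
  have hlog : log (t ^ 2) ≤ 2 * (t - 1) := by
    rw [log_pow]; push_cast; linarith [log_le_sub_one_of_pos ht]
  have hct : c6 < cFun n * t := by
    rw [mul_add, mul_div_cancel₀ _ hc.ne', mul_one]; linarith
  rw [g1]
  nlinarith [mul_le_mul_of_nonneg_left hlog c6_pos.le]

end Valley

/-- For fixed `n ≥ 3`: `m ↦ ∂_m h₁(m,n)` is strictly convex with unique critical
point `m = c₆/(2c_n)`, at which it takes the negative value `−c₆ − c₆ ln(c₆/(2c_n))`;
consequently `m ↦ h₁(m,n)` has exactly two critical points, the larger of which is a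
local minimum. -/
theorem stmt8 (n : ℝ) (hn : 3 ≤ n) :
    (∀ m ∈ Set.Ioi (0 : ℝ), HasDerivAt (fun m => h1 m n) (g1 n m) m) ∧
    StrictConvexOn ℝ (Set.Ioi 0) (g1 n) ∧
    (∀ m ∈ Set.Ioi (0 : ℝ), HasDerivAt (g1 n) (2 * cFun n - c6 / m) m) ∧
    (∀ m ∈ Set.Ioi (0 : ℝ), (2 * cFun n - c6 / m = 0 ↔ m = c6 / (2 * cFun n))) ∧
    g1 n (c6 / (2 * cFun n)) = -c6 - c6 * Real.log (c6 / (2 * cFun n)) ∧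
    g1 n (c6 / (2 * cFun n)) < 0 ∧
    ∃ m₁ m₂ : ℝ, 0 < m₁ ∧ m₁ < m₂ ∧
      {m : ℝ | m ∈ Set.Ioi (0 : ℝ) ∧ g1 n m = 0} = {m₁, m₂} ∧
      IsLocalMin (fun m => h1 m n) m₂ := by
  have hc : 0 < cFun n := cFun_pos (by linarith)
  obtain ⟨m₁, m₂, hm₁, hm₁M, hMm₂, hzeros⟩ := exists_zeroSet_eq_pair (exp_pos (-2))
    ((exp_lt_exp.2 (by norm_num)).trans (exp_neg_one_lt_critPt hn)) (critPt_lt_sq hc)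
    (fun m hm => (hasDerivAt_g1 n hm).continuousAt.continuousWithinAt) (strictAntiOn_g1 hc)
    (strictMonoOn_g1 hc) (g1_exp_neg_two_pos hc) (g1_critPt_neg hn) (g1_sq_pos hc)
  have hm₂ : m₂ ∈ {m | m ∈ Ioi 0 ∧ g1 n m = 0} := hzeros ▸ Or.inr rfl
  refine ⟨fun m hm => hasDerivAt_h1 n hm, strictConvexOn_g1 n, fun m hm => hasDerivAt_g1 n hm,
    fun m hm => two_mul_cFun_sub_div_eq_zero_iff hc.ne' hm.ne', g1_critPt hc.ne',
    g1_critPt_neg hn, m₁, m₂, hm₁, hm₁M.trans hMm₂, hzeros, ?_⟩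
  exact isLocalMin_of_hasDerivAt_of_strictMonoOn hMm₂
    (fun y hy => hasDerivAt_h1 n ((critPt_pos hc).trans hy))
    ((strictMonoOn_g1 hc).mono Ioi_subset_Ici_self) hm₂.2
end

section
/- Let α ∈ (0,1) and define Θ_α(λ) = (1+λ)(1 + λ^α − (1+λ)^α)/λ^α for λ ∈ (0,1]. Then Θ_α(λ) > 0 for all λ ∈ (0,1], and the function Λ(λ) = (1−α)λ + λ^{1+α} − (1+α)(1+λ)^α λ + α(1+λ)^{1+α} − α, which satisfies Θ_α'(λ) = Λ(λ)/λ^{1+α}, vanishes at exactly one point λ ∈ (0,1). -/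
/-!
Positivity of `Θ_α` is the strict subadditivity `(1 + λ)^α < 1 + λ^α` of a power with exponent
below one. For `Λ`, the identity `Λ(λ) = λ(λ^α - α) + (α - λ)((1 + λ)^α - 1)` together with
Bernoulli's inequality shows `Λ < 0` near `0`, while `Λ(1) = (1 - α)(2 - 2^α) > 0`, so `Λ` has a
zero in `(0,1)`. Another Bernoulli inequality, with exponent `2 - α`, gives `Λ'' > 0`, and a
strictly convex function vanishing at `0` has at most one further zero.
-/

open Real Set

noncomputable def Theta (α l : ℝ) : ℝ :=
  (1 + l) * ((1 + l ^ α - (1 + l) ^ α) / l ^ α)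

noncomputable def Lam (α l : ℝ) : ℝ :=
  (1 - α) * l + l ^ (1 + α) - (1 + α) * (1 + l) ^ α * l + α * (1 + l) ^ (1 + α) - α

theorem StrictConvexOn.eq_of_apply_eq_of_ne {𝕜 : Type*} [Field 𝕜] [LinearOrder 𝕜]
    [IsStrictOrderedRing 𝕜] {s : Set 𝕜} {f : 𝕜 → 𝕜} (hf : StrictConvexOn 𝕜 s f) {a x y : 𝕜}
    (ha : a ∈ s) (hx : x ∈ s) (hy : y ∈ s) (hxa : x ≠ a) (hya : y ≠ a) (hfx : f x = f a)
    (hfy : f y = f a) : x = y := by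
  by_contra hxy
  rcases lt_or_gt_of_ne hxy with h | h
  · simpa [hfx, hfy] using hf.secant_strict_mono ha hx hy hxa hya h
  · simpa [hfx, hfy] using hf.secant_strict_mono ha hy hx hya hxa h

namespace Real

theorem rpow_add_lt_add_rpow {p a b : ℝ} (ha : 0 < a) (hb : 0 < b) (hp : p < 1) :
    (a + b) ^ p < a ^ p + b ^ p := by
  have hab : 0 < a + b := by positivity
  have key : ∀ c : ℝ, 0 < c → c < a + b → c * (a + b) ^ (p - 1) < c ^ p := fun c hc hcab =>
    calc c * (a + b) ^ (p - 1) < c * c ^ (p - 1) :=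
        mul_lt_mul_of_pos_left (rpow_lt_rpow_of_neg hc hcab (by linarith)) hc
      _ = c ^ p := by rw [rpow_sub_one hc.ne']; field_simp
  calc (a + b) ^ p = a * (a + b) ^ (p - 1) + b * (a + b) ^ (p - 1) := by
        rw [← add_mul, rpow_sub_one hab.ne']; field_simp
    _ < a ^ p + b ^ p := add_lt_add (key a ha (by linarith)) (key b hb (by linarith))

theorem add_lt_rpow_one_sub_mul_one_add_rpow {p l : ℝ} (hp : 1 < p) (hl : 0 < l) :
    l + p < l ^ (1 - p) * (1 + l) ^ p := by
  have h := one_add_mul_self_lt_rpow_one_add (by linarith [one_div_pos.2 hl] : (-1 : ℝ) ≤ 1 / l)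
    (one_div_ne_zero hl.ne') hp
  rw [show 1 + p * (1 / l) = (l + p) / l by field_simp, show (1 : ℝ) + 1 / l = (1 + l) / l by
    field_simp; ring, div_rpow (by positivity) hl.le, div_lt_div_iff₀ hl (by positivity)] at h
  rw [rpow_sub hl, rpow_one, div_mul_eq_mul_div, lt_div_iff₀ (by positivity)]
  linarith

end Real

open Filter Topology

noncomputable def Lam' (α l : ℝ) : ℝ :=
  (1 - α) + (1 + α) * (l ^ α - α * l * (1 + l) ^ (α - 1) - (1 - α) * (1 + l) ^ α)

noncomputable def Lam'' (α l : ℝ) : ℝ :=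
  α * (1 + α) * (l ^ (α - 1) + (1 - α) * l * (1 + l) ^ (α - 2) - (2 - α) * (1 + l) ^ (α - 1))

section

variable {α l : ℝ}

theorem Theta_pos (hα : α < 1) (hl : 0 < l) : 0 < Theta α l := by
  have hsub := rpow_add_lt_add_rpow one_pos hl hα
  rw [one_rpow] at hsub
  have hpow := rpow_pos_of_pos hl α
  unfold Theta
  exact mul_pos (by linarith) (div_pos (by linarith) hpow)

theorem hasDerivAt_Theta (hl : 0 < l) :
    HasDerivAt (Theta α) (Lam α l / l ^ (1 + α)) l := by
  have hl' : 0 < 1 + l := by linarith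
  have hpow : HasDerivAt (fun x : ℝ => x ^ α) (α * l ^ (α - 1)) l :=
    hasDerivAt_rpow_const (Or.inl hl.ne')
  have hpow₁ : HasDerivAt (fun x : ℝ => (1 + x) ^ α) (1 * α * (1 + l) ^ (α - 1)) l :=
    ((hasDerivAt_id' l).const_add 1).rpow_const (Or.inl hl'.ne')
  have h : HasDerivAt (fun x => (1 + x) * ((1 + x ^ α - (1 + x) ^ α) / x ^ α)) _ l :=
    ((hasDerivAt_id' l).const_add 1).mul
      (((hpow.const_add 1).sub hpow₁).div hpow (rpow_pos_of_pos hl α).ne')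
  refine h.congr_deriv ?_
  rw [Pi.sub_apply, Lam, rpow_sub_one hl.ne', rpow_sub_one hl'.ne', rpow_add hl, rpow_add hl',
    rpow_one, rpow_one]
  field_simp
  ring

theorem Lam_eq (hl : 0 < l) : Lam α l = l * (l ^ α - α) + (α - l) * ((1 + l) ^ α - 1) := by
  rw [Lam, rpow_add hl, rpow_add (by linarith), rpow_one, rpow_one]
  ring

theorem Lam_zero (hα : α ≠ -1) : Lam α 0 = 0 := by
  rw [Lam, zero_rpow (by contrapose! hα; linarith)]
  simp

theorem Lam_one_pos (hα : α < 1) : 0 < Lam α 1 := by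
  have h : (2 : ℝ) ^ α < 2 ^ (1 : ℝ) := rpow_lt_rpow_of_exponent_lt one_lt_two hα
  rw [Lam_eq one_pos]
  norm_num at h ⊢
  nlinarith

theorem Lam_neg (hα : α ∈ Ioo 0 1) (hl : 0 < l) (h : l ^ α < α * (1 - α)) : Lam α l < 0 := by
  obtain ⟨hα₀, hα₁⟩ := hα
  have hl₁ : l ≤ 1 := by
    by_contra! hl₁
    nlinarith [one_le_rpow hl₁.le hα₀.le]
  have hlα : l < α := by
    nlinarith [self_le_rpow_of_le_one hl.le hl₁ hα₁.le]
  have hbernoulli : (1 + l) ^ α - 1 ≤ α * l := by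
    linarith [rpow_one_add_le_one_add_mul_self (by linarith : (-1 : ℝ) ≤ l) hα₀.le hα₁.le]
  rw [Lam_eq hl]
  nlinarith [mul_le_mul_of_nonneg_left hbernoulli (sub_nonneg.2 hlα.le),
    mul_lt_mul_of_pos_left h hl, mul_pos hα₀ (mul_pos hl hl)]

theorem exists_Lam_neg (hα : α ∈ Ioo 0 1) : ∃ l ∈ Ioo 0 1, Lam α l < 0 := by
  obtain ⟨hα₀, hα₁⟩ := hα
  set c := α * (1 - α) / 2 with hc
  have hc₀ : 0 < c := by positivity
  have hc₁ : c < 1 := by nlinarith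
  refine ⟨c ^ (1 / α), ⟨rpow_pos_of_pos hc₀ _, rpow_lt_one hc₀.le hc₁ (by positivity)⟩,
    Lam_neg ⟨hα₀, hα₁⟩ (rpow_pos_of_pos hc₀ _) ?_⟩
  rw [← rpow_mul hc₀.le, one_div_mul_cancel hα₀.ne', rpow_one]
  linarith

theorem continuous_Lam (hα : 0 ≤ α) : Continuous (Lam α) := by
  have h₁ := continuous_rpow_const hα
  have h₂ := continuous_rpow_const (by linarith : 0 ≤ 1 + α)
  unfold Lam
  fun_prop

theorem hasDerivAt_one_add_rpow (p : ℝ) (hl : -1 < l) :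
    HasDerivAt (fun x : ℝ => (1 + x) ^ p) (p * (1 + l) ^ (p - 1)) l := by
  simpa using ((hasDerivAt_id' l).const_add 1).rpow_const (p := p) (Or.inl (by linarith))

theorem hasDerivAt_Lam (hl : 0 < l) : HasDerivAt (Lam α) (Lam' α l) l := by
  have h : HasDerivAt
      (fun x => (1 - α) * x + x ^ (1 + α) - (1 + α) * (1 + x) ^ α * x + α * (1 + x) ^ (1 + α) - α)
      _ l :=
    (((((hasDerivAt_id' l).const_mul (1 - α)).add (hasDerivAt_rpow_const (Or.inl hl.ne'))).sub
      (((hasDerivAt_one_add_rpow α (by linarith)).const_mul (1 + α)).mul (hasDerivAt_id' l))).add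
      ((hasDerivAt_one_add_rpow (1 + α) (by linarith)).const_mul α)).sub_const α
  refine h.congr_deriv ?_
  simp only [Lam', add_sub_cancel_left]
  ring

theorem hasDerivAt_Lam' (hl : 0 < l) : HasDerivAt (Lam' α) (Lam'' α l) l := by
  have h : HasDerivAt
      (fun x => (1 - α) + (1 + α) * (x ^ α - α * x * (1 + x) ^ (α - 1) - (1 - α) * (1 + x) ^ α))
      _ l :=
    ((((hasDerivAt_rpow_const (Or.inl hl.ne')).sub (((hasDerivAt_id' l).const_mul α).mul
      (hasDerivAt_one_add_rpow (α - 1) (by linarith)))).sub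
      ((hasDerivAt_one_add_rpow α (by linarith)).const_mul (1 - α))).const_mul (1 + α)).const_add
      (1 - α)
  refine h.congr_deriv ?_
  rw [Lam'', show α - 1 - 1 = α - 2 by ring]
  ring

theorem Lam''_pos (hα : α ∈ Ioo 0 1) (hl : 0 < l) : 0 < Lam'' α l := by
  obtain ⟨hα₀, hα₁⟩ := hα
  have hl' : 0 < 1 + l := by linarith
  have hbernoulli := add_lt_rpow_one_sub_mul_one_add_rpow (p := 2 - α) (by linarith) hl
  rw [show 1 - (2 - α) = α - 1 by ring] at hbernoulli
  have hfactor : l ^ (α - 1) + (1 - α) * l * (1 + l) ^ (α - 2) - (2 - α) * (1 + l) ^ (α - 1)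
      = (1 + l) ^ (α - 2) * (l ^ (α - 1) * (1 + l) ^ (2 - α) - (l + (2 - α))) := by
    rw [show α - 1 = α - 2 + 1 by ring, rpow_add_one hl'.ne', show 2 - α = -(α - 2) by ring,
      rpow_neg hl'.le]
    field_simp
    ring
  rw [Lam'', hfactor]
  exact mul_pos (by positivity) (mul_pos (rpow_pos_of_pos hl' _) (by linarith))

theorem strictConvexOn_Lam (hα : α ∈ Ioo 0 1) : StrictConvexOn ℝ (Ici 0) (Lam α) := by
  refine strictConvexOn_of_deriv2_pos (convex_Ici 0) (continuous_Lam hα.1.le).continuousOn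
    fun x hx => ?_
  rw [interior_Ici] at hx
  have hderiv : deriv (Lam α) =ᶠ[𝓝 x] Lam' α :=
    eventually_of_mem (Ioi_mem_nhds hx) fun y hy => (hasDerivAt_Lam hy).deriv
  rw [show deriv^[2] (Lam α) x = deriv (deriv (Lam α)) x from rfl, hderiv.deriv_eq,
    (hasDerivAt_Lam' hx).deriv]
  exact Lam''_pos hα hx

end

/-- For `α ∈ (0,1)`: `Θ_α > 0` on `(0,1]`, the derivative of `Θ_α` is `Λ(λ)/λ^{1+α}`,
and `Λ` vanishes at exactly one point of `(0,1)`. -/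
theorem stmt12 (α : ℝ) (hα : α ∈ Set.Ioo (0 : ℝ) 1) :
    (∀ l ∈ Set.Ioc (0 : ℝ) 1, 0 < Theta α l) ∧
    (∀ l ∈ Set.Ioo (0 : ℝ) 1,
      HasDerivAt (fun l => Theta α l) (Lam α l / l ^ (1 + α)) l) ∧
    (∃! l : ℝ, l ∈ Set.Ioo (0 : ℝ) 1 ∧ Lam α l = 0) := by
  refine ⟨fun l hl => Theta_pos hα.2 hl.1, fun l hl => hasDerivAt_Theta hl.1, ?_⟩
  obtain ⟨l₀, hl₀, hneg⟩ := exists_Lam_neg hα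
  obtain ⟨z, hz, hLz⟩ := intermediate_value_Ioo hl₀.2.le
    (continuous_Lam hα.1.le).continuousOn ⟨hneg, Lam_one_pos hα.2⟩
  have hz₀ : 0 < z := hl₀.1.trans hz.1
  refine ⟨z, ⟨⟨hz₀, hz.2⟩, hLz⟩, fun y ⟨hy, hLy⟩ => ?_⟩
  have hL₀ := Lam_zero (α := α) (by linarith [hα.1])
  exact (strictConvexOn_Lam hα).eq_of_apply_eq_of_ne self_mem_Ici hy.1.le hz₀.le hy.1.ne'
    hz₀.ne' (hLy.trans hL₀.symm) (hLz.trans hL₀.symm)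
end

section
/- For α ∈ (0,1), the function φ(α) := 2^{1−α}(1 + α²) − (1 + α) is strictly positive. -/
/-!
Since `2 ^ x = exp (x log 2) ≥ 1 + x log 2`, it suffices to show
`(1 + c (1 - α)) (1 + α²) > 1 + α` for `c = log 2`. The difference factors as
`(1 - α) (c α² - α + c)`, and the quadratic factor is positive as soon as `c > 1/2`,
because `c α² - α + c > (α² + 1) / 2 - α = (α - 1)² / 2`.
-/

open Real Set

lemma one_add_mul_log_le_rpow {b : ℝ} (hb : 0 < b) (x : ℝ) : 1 + x * log b ≤ b ^ x := by
  rw [rpow_def_of_pos hb, mul_comm x]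
  linarith [add_one_le_exp (log b * x)]

lemma one_add_lt_one_add_mul_sub_mul_one_add_sq {c α : ℝ} (hc : 1 / 2 < c) (hα : α < 1) :
    1 + α < (1 + (1 - α) * c) * (1 + α ^ 2) := by
  have hquad : 0 < c * α ^ 2 - α + c := by nlinarith [sq_nonneg (α - 1)]
  have hfactor : (1 + (1 - α) * c) * (1 + α ^ 2) - (1 + α) = (1 - α) * (c * α ^ 2 - α + c) := by
    ring
  rw [← sub_pos, hfactor]
  exact mul_pos (sub_pos.2 hα) hquad

/-- For `α ∈ (0,1)`, `2^{1−α}(1 + α²) − (1 + α) > 0`. -/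
theorem stmt14 : ∀ α ∈ Set.Ioo (0 : ℝ) 1,
    0 < (2 : ℝ) ^ (1 - α) * (1 + α ^ 2) - (1 + α) := by
  rintro α ⟨-, hα⟩
  have hlog : (1 : ℝ) / 2 < log 2 := by linarith [log_two_gt_d9]
  calc (0 : ℝ) < (1 + (1 - α) * log 2) * (1 + α ^ 2) - (1 + α) :=
        sub_pos.2 (one_add_lt_one_add_mul_sub_mul_one_add_sq hlog hα)
    _ ≤ (2 : ℝ) ^ (1 - α) * (1 + α ^ 2) - (1 + α) := by
        gcongr
        exact one_add_mul_log_le_rpow two_pos (1 - α)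
end

section
/- Let α ∈ (0,1) and define q(x) = 1 + α(x − 1) + (α − 1)(x − 1)² for x ≥ 0. Then x^α ≥ q(x) for all x ≥ 0. -/
open Real Set

/-! Write `D(x) = α + (1 - α) x` for the tangent line of `x ↦ x ^ (1 - α)` at `1`.
Bernoulli's inequality `x ^ (1 - α) ≤ D(x)` gives `x ≤ x ^ α D(x)`, while the quadratic `q`
satisfies the polynomial identity `q(x) D(x) = x - (1 - α)² (x - 1)² x ≤ x`.
Dividing by `D(x) > 0` yields `q(x) ≤ x ^ α`. -/

lemma quadratic_mul_tangent_eq (α x : ℝ) :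
    (1 + α * (x - 1) + (α - 1) * (x - 1) ^ 2) * (α + (1 - α) * x) =
      x - (1 - α) ^ 2 * (x - 1) ^ 2 * x := by
  ring

lemma self_le_rpow_mul_tangent {α x : ℝ} (hα0 : 0 ≤ α) (hα1 : α ≤ 1) (hx : 0 ≤ x) :
    x ≤ x ^ α * (α + (1 - α) * x) := by
  have bernoulli : x ^ (1 - α) ≤ α + (1 - α) * x := by
    have := rpow_one_add_le_one_add_mul_self (s := x - 1) (by linarith)
      (p := 1 - α) (by linarith) (by linarith)
    simp only [add_sub_cancel] at this
    linarith
  calc x = x ^ α * x ^ (1 - α) := by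
        rw [← rpow_add' hx (by norm_num), add_sub_cancel, rpow_one]
    _ ≤ x ^ α * (α + (1 - α) * x) := by gcongr

/-- For `α ∈ (0,1)` and `x ≥ 0`,
`x^α ≥ 1 + α(x − 1) + (α − 1)(x − 1)²`. -/
theorem stmt19 (α : ℝ) (hα : α ∈ Set.Ioo (0 : ℝ) 1) (x : ℝ) (hx : 0 ≤ x) :
    1 + α * (x - 1) + (α - 1) * (x - 1) ^ 2 ≤ x ^ α := by
  obtain ⟨hα0, hα1⟩ := hα
  have tangent_pos : 0 < α + (1 - α) * x := by nlinarith
  refine le_of_mul_le_mul_right ?_ tangent_pos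
  calc (1 + α * (x - 1) + (α - 1) * (x - 1) ^ 2) * (α + (1 - α) * x)
      = x - (1 - α) ^ 2 * (x - 1) ^ 2 * x := quadratic_mul_tangent_eq α x
    _ ≤ x := sub_le_self x (by positivity)
    _ ≤ x ^ α * (α + (1 - α) * x) := self_le_rpow_mul_tangent hα0.le hα1.le hx
end
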